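/- Let R be a gr-prime graded ring and I a nonzero graded ideal of R. If R admits a generalized homogeneous derivation F with nonzero associated homogeneous derivation d such that F(xy) − xy ∈ Z(R) for all x, y ∈ I, then R is commutative. -/

import Mathlib

def IsHomog {G R : Type*} [Ring R] (A : G → AddSubgroup R) (a : R) : Prop := ∃ g, a ∈ A g

def GrPrime {G R : Type*} [Ring R] (A : G → AddSubgroup R) : Prop :=
  ∀ a b : R, IsHomog A a → IsHomog A b → (∀ r : R, a * r * b = 0) → a = 0 ∨ b = 0

def IsHomogDer {G R : Type*} [Ring R] (A : G → AddSubgroup R) (d : R → R) : Prop :=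
  (∀ x y : R, d (x + y) = d x + d y) ∧
  (∀ x y : R, d (x * y) = d x * y + x * d y) ∧
  (∀ a : R, IsHomog A a → IsHomog A (d a))

def IsGenHomogDer {G R : Type*} [Ring R] (A : G → AddSubgroup R) (F d : R → R) : Prop :=
  (∀ x y : R, F (x + y) = F x + F y) ∧
  IsHomogDer A d ∧
  (∀ x y : R, F (x * y) = F x * y + x * d y) ∧
  (∀ a : R, IsHomog A a → IsHomog A (F a))

/-!
Write `[w, z] = w z - z w`. Since `F((x y) z) = F(x y) z + x y d(z)` and both `F(x y) - x y` and
`F(x (y z)) - x (y z)` are central, `x y d(z)` commutes with `z` for `x, y ∈ I` and every `z`;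
replacing `x` by `w x` gives `[w, z] x y d(z) = 0` for all `w, z`. If homogeneous `w, z` did not
commute, gr-primeness (through a nonzero homogeneous element of `I`) would force `d(z) = 0`, then,
from the identity at `z + z'`, `d(z') = 0` for every homogeneous `z'`, hence `d = 0`. So
homogeneous elements commute, and therefore all elements do.
-/

section Graded

variable {G R : Type*} [Ring R] {A : G → AddSubgroup R}

theorem IsHomog.mul [AddMonoid G] [SetLike.GradedMonoid A] {a b : R}
    (ha : IsHomog A a) (hb : IsHomog A b) : IsHomog A (a * b) :=
  let ⟨_, ha⟩ := ha; let ⟨_, hb⟩ := hb; ⟨_, SetLike.mul_mem_graded ha hb⟩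

theorem IsHomog.mul_sub_mul [AddCommMonoid G] [SetLike.GradedMonoid A] {a b : R}
    (ha : IsHomog A a) (hb : IsHomog A b) : IsHomog A (a * b - b * a) := by
  obtain ⟨g, ha⟩ := ha
  obtain ⟨h, hb⟩ := hb
  refine ⟨g + h, sub_mem (SetLike.mul_mem_graded ha hb) ?_⟩
  rw [add_comm]
  exact SetLike.mul_mem_graded hb ha

variable [DecidableEq G] [DirectSum.Decomposition A]

theorem isHomog_induction {P : R → Prop} (zero : P 0) (add : ∀ a b, P a → P b → P (a + b))
    (homog : ∀ a, IsHomog A a → P a) (r : R) : P r :=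
  DirectSum.Decomposition.inductionOn A zero (fun m => homog _ ⟨_, m.2⟩) add r

theorem commute_of_commute_isHomog (h : ∀ a b : R, IsHomog A a → IsHomog A b → Commute a b)
    (a b : R) : Commute a b :=
  isHomog_induction (A := A) (Commute.zero_right a) (fun _ _ => Commute.add_right)
    (fun b hb => isHomog_induction (A := A) (P := fun a => Commute a b) (Commute.zero_left b)
      (fun _ _ => Commute.add_left) (fun a ha => h a b ha hb) a) b

theorem eq_zero_of_map_add_of_isHomog {f : R → R} (hadd : ∀ x y, f (x + y) = f x + f y)
    (h : ∀ z, IsHomog A z → f z = 0) : f = 0 := by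
  funext r
  exact isHomog_induction (A := A) (P := fun r => f r = 0) (by simpa using hadd 0 0)
    (fun a b ha hb => by rw [hadd, ha, hb, add_zero]) h r

theorem exists_isHomog_ne_zero_mem {I : AddSubgroup R} (hI0 : I ≠ ⊥)
    (hIgr : ∀ x ∈ I, ∀ g : G, (DirectSum.decompose A x g : R) ∈ I) :
    ∃ e ∈ I, IsHomog A e ∧ e ≠ 0 := by
  classical
  by_contra! h
  refine hI0 ((AddSubgroup.eq_bot_iff_forall I).mpr fun x hx => ?_)
  rw [← DirectSum.sum_support_decompose A x]
  exact Finset.sum_eq_zero fun g _ => h _ (hIgr x hx g) ⟨g, SetLike.coe_mem _⟩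

end Graded

namespace GrPrime

variable {G R : Type*} [Ring R] {A : G → AddSubgroup R} [DecidableEq G] {I : AddSubgroup R}

theorem eq_zero_or_eq_zero_of_isHomog [DirectSum.Decomposition A] (hP : GrPrime A) {a b : R}
    (ha : IsHomog A a) (hb : IsHomog A b) (h : ∀ s, IsHomog A s → a * s * b = 0) : a = 0 ∨ b = 0 :=
  hP a b ha hb <| isHomog_induction (A := A) (by simp)
    (fun u v hu hv => by simp only [mul_add, add_mul, hu, hv, add_zero]) h

variable [AddMonoid G] [GradedRing A]

theorem eq_zero_of_forall_mem_mul_eq_zero (hP : GrPrime A)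
    (hIr : ∀ r : R, ∀ x ∈ I, x * r ∈ I) (hI : ∃ e ∈ I, IsHomog A e ∧ e ≠ 0) {b : R} (hb : IsHomog A b)
    (h : ∀ y ∈ I, IsHomog A y → y * b = 0) : b = 0 := by
  obtain ⟨e, heI, he, he0⟩ := hI
  exact (hP.eq_zero_or_eq_zero_of_isHomog he hb fun s hs =>
    h _ (hIr s e heI) (he.mul hs)).resolve_left he0

theorem eq_zero_of_forall_mul_mul_mul_eq_zero (hP : GrPrime A)
    (hIl : ∀ r : R, ∀ x ∈ I, r * x ∈ I) (hIr : ∀ r : R, ∀ x ∈ I, x * r ∈ I)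
    (hI : ∃ e ∈ I, IsHomog A e ∧ e ≠ 0) {b c : R} (hc : IsHomog A c) (hc0 : c ≠ 0)
    (hb : IsHomog A b) (h : ∀ x ∈ I, ∀ y ∈ I, c * (x * y * b) = 0) : b = 0 := by
  have hxy : ∀ x ∈ I, IsHomog A x → ∀ y ∈ I, IsHomog A y → x * (y * b) = 0 :=
    fun x hx hxh y hy hyh => (hP.eq_zero_or_eq_zero_of_isHomog hc (hxh.mul (hyh.mul hb))
      fun s _ => by simpa only [mul_assoc] using h (s * x) (hIl s x hx) y hy).resolve_left hc0
  exact hP.eq_zero_of_forall_mem_mul_eq_zero hIr hI hb fun y hy hyh =>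
    hP.eq_zero_of_forall_mem_mul_eq_zero hIr hI (hyh.mul hb) fun x hx hxh => hxy x hx hxh y hy hyh

end GrPrime

section Derivation

variable {R : Type*} [Ring R] {I : AddSubgroup R} {F d : R → R}

theorem mul_sub_mul_mul_eq_zero_of_commute {w z b : R} (hb : Commute b z)
    (hwb : Commute (w * b) z) : (w * z - z * w) * b = 0 := by
  rw [sub_mul, sub_eq_zero, mul_assoc, ← hb.eq, ← mul_assoc, hwb.eq, mul_assoc]

theorem commute_mul_mul_map_of_commute (hFmul : ∀ x y, F (x * y) = F x * y + x * d y)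
    (hIr : ∀ r : R, ∀ x ∈ I, x * r ∈ I)
    (h : ∀ x ∈ I, ∀ y ∈ I, ∀ r, Commute (F (x * y) - x * y) r) {x y : R} (z : R)
    (hx : x ∈ I) (hy : y ∈ I) : Commute (x * y * d z) z := by
  have hxyz : F (x * (y * z)) - x * (y * z) = (F (x * y) - x * y) * z + x * y * d z := by
    rw [← mul_assoc, hFmul, sub_mul]
    abel
  have := h x hx (y * z) (hIr z y hy) z
  rw [hxyz] at this
  simpa using this.sub_left ((h x hx y hy z).mul_left (Commute.refl z))

theorem mul_sub_mul_mul_mul_map_eq_zero (hFmul : ∀ x y, F (x * y) = F x * y + x * d y)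
    (hIl : ∀ r : R, ∀ x ∈ I, r * x ∈ I) (hIr : ∀ r : R, ∀ x ∈ I, x * r ∈ I)
    (h : ∀ x ∈ I, ∀ y ∈ I, ∀ r, Commute (F (x * y) - x * y) r) (w z : R) {x y : R}
    (hx : x ∈ I) (hy : y ∈ I) : (w * z - z * w) * (x * y * d z) = 0 :=
  mul_sub_mul_mul_eq_zero_of_commute (commute_mul_mul_map_of_commute hFmul hIr h z hx hy) <| by
    simpa only [mul_assoc] using commute_mul_mul_map_of_commute hFmul hIr h z (hIl w x hx) hy

end Derivation

namespace IsHomogDer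

variable {G R : Type*} [Ring R] {A : G → AddSubgroup R} [DecidableEq G] {d : R → R}

theorem commute_of_isHomog [AddCommMonoid G] [GradedRing A] (hd : IsHomogDer A d) (hd0 : d ≠ 0)
    (hP : GrPrime A) {I : AddSubgroup R} (hIl : ∀ r : R, ∀ x ∈ I, r * x ∈ I)
    (hIr : ∀ r : R, ∀ x ∈ I, x * r ∈ I) (hI : ∃ e ∈ I, IsHomog A e ∧ e ≠ 0)
    (hcomm : ∀ w z, ∀ x ∈ I, ∀ y ∈ I, (w * z - z * w) * (x * y * d z) = 0)
    {w z : R} (hw : IsHomog A w) (hz : IsHomog A z) : Commute w z := by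
  by_contra hne
  have hc0 : w * z - z * w ≠ 0 := sub_ne_zero.mpr hne
  have hc := hw.mul_sub_mul hz
  have hdz : d z = 0 := hP.eq_zero_of_forall_mul_mul_mul_eq_zero hIl hIr hI hc hc0
    (hd.2.2 z hz) (hcomm w z)
  refine hd0 (eq_zero_of_map_add_of_isHomog (A := A) hd.1 fun z' hz' => ?_)
  refine hP.eq_zero_of_forall_mul_mul_mul_eq_zero hIl hIr hI hc hc0 (hd.2.2 z' hz')
    fun x hx y hy => ?_
  -- `d z = 0` turns the identity at `z + z'` into one with `d z'`; subtract the identity at `z'`.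
  have hsum := hcomm w (z + z') x hx y hy
  rw [hd.1, hdz, zero_add] at hsum
  calc (w * z - z * w) * (x * y * d z')
      = (w * (z + z') - (z + z') * w) * (x * y * d z') - (w * z' - z' * w) * (x * y * d z') := by
        noncomm_ring
    _ = 0 := by rw [hsum, hcomm w z' x hx y hy, sub_zero]

end IsHomogDer

theorem stmt12 {G R : Type*} [AddCommGroup G] [DecidableEq G] [Ring R] (A : G → AddSubgroup R) [GradedRing A] (hP : GrPrime A)
    (I : AddSubgroup R) (hI0 : I ≠ ⊥)
    (hIl : ∀ (r : R), ∀ x ∈ I, r * x ∈ I) (hIr : ∀ (r : R), ∀ x ∈ I, x * r ∈ I)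
    (hIgr : ∀ x ∈ I, ∀ g : G, (DirectSum.decompose A x g : R) ∈ I)
    (F d : R → R) (hF : IsGenHomogDer A F d) (hd : d ≠ 0)
    (h : ∀ x ∈ I, ∀ y ∈ I, ∀ r : R, (F (x * y) - x * y) * r = r * (F (x * y) - x * y)) :
    ∀ a b : R, a * b = b * a := by
  obtain ⟨-, hder, hFmul, -⟩ := hF
  have hI := exists_isHomog_ne_zero_mem hI0 hIgr
  have hcomm : ∀ w z, ∀ x ∈ I, ∀ y ∈ I, (w * z - z * w) * (x * y * d z) = 0 :=
    fun w z x hx y hy => mul_sub_mul_mul_mul_map_eq_zero hFmul hIl hIr h w z hx hy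
  exact commute_of_commute_isHomog fun w z hw hz =>
    hder.commute_of_isHomog hd hP hIl hIr hI hcomm hw hz
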